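/- If B ⊇ C is a Frobenius extension (with Frobenius homomorphism F : B → C and dual bases b_i ∈ B, φ_i ∈ Hom(B_C, C_C)), then a tower A ⊇ B ⊇ C is left relative H-separable (B ⊗_C A ⊕ * ≅ A^n as B-A-bimodules) if and only if it is right relative H-separable (A ⊗_C B ⊕ * ≅ A^n as A-B-bimodules). -/

import Mathlib

/-!  A noncommutative relative tensor product `L ⊗_C R` for a ring `C` mapping
into rings `L` (acting on the right through `f`) and `R` (acting on the left
through `g`), together with the outer left `L`-action `lact`, the outer right
`R`-action `ract`, a lifting principle for balanced biadditive maps, and the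
multiplication map. -/

open scoped TensorProduct

noncomputable section
namespace NCT

variable {C L R : Type*} [Ring C] [Ring L] [Ring R]

/-- The submodule of relations `(l * f c) ⊗ r - l ⊗ (g c * r)`. -/
def rel (f : C →+* L) (g : C →+* R) : Submodule ℤ (L ⊗[ℤ] R) :=
  Submodule.span ℤ
    {x | ∃ (l : L) (c : C) (r : R), x = (l * f c) ⊗ₜ[ℤ] r - l ⊗ₜ[ℤ] (g c * r)}

/-- The relative tensor product `L ⊗_C R`. -/
def Tens (f : C →+* L) (g : C →+* R) : Type _ := (L ⊗[ℤ] R) ⧸ rel f g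

instance (f : C →+* L) (g : C →+* R) : AddCommGroup (Tens f g) :=
  inferInstanceAs (AddCommGroup ((L ⊗[ℤ] R) ⧸ rel f g))

variable (f : C →+* L) (g : C →+* R)

/-- The canonical image of `l ⊗ r` in `L ⊗_C R`. -/
def tmul (l : L) (r : R) : Tens f g := Submodule.Quotient.mk (l ⊗ₜ[ℤ] r)

lemma tmul_rel (l : L) (c : C) (r : R) :
    tmul f g (l * f c) r = tmul f g l (g c * r) := by
  refine (Submodule.Quotient.eq _).2 ?_
  exact Submodule.subset_span ⟨l, c, r, rfl⟩

lemma tmul_add_left (l l' : L) (r : R) :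
    tmul f g (l + l') r = tmul f g l r + tmul f g l' r := by
  show Submodule.Quotient.mk _ = _
  rw [TensorProduct.add_tmul, Submodule.Quotient.mk_add]; rfl

lemma tmul_add_right (l : L) (r r' : R) :
    tmul f g l (r + r') = tmul f g l r + tmul f g l r' := by
  show Submodule.Quotient.mk _ = _
  rw [TensorProduct.tmul_add, Submodule.Quotient.mk_add]; rfl

/-- Package a biadditive map as a bundled `AddMonoidHom`-valued hom. -/
def mkBilin {M N P : Type*} [AddCommGroup M] [AddCommGroup N] [AddCommGroup P]
    (φ : M → N → P)
    (h1 : ∀ m m' n, φ (m + m') n = φ m n + φ m' n)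
    (h2 : ∀ m n n', φ m (n + n') = φ m n + φ m n') : M →+ N →+ P :=
  AddMonoidHom.mk' (fun m => AddMonoidHom.mk' (φ m) (h2 m))
    (fun m m' => by ext n; exact h1 m m' n)

@[simp] lemma mkBilin_apply {M N P : Type*} [AddCommGroup M] [AddCommGroup N] [AddCommGroup P]
    (φ : M → N → P) (h1 h2) (m : M) (n : N) : mkBilin φ h1 h2 m n = φ m n := rfl

/-- Lift a balanced biadditive map to the relative tensor product. -/
def lift {P : Type*} [AddCommGroup P] (φ : L →+ R →+ P)
    (hbal : ∀ l c r, φ (l * f c) r = φ l (g c * r)) : Tens f g →+ P :=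
  (Submodule.liftQ (rel f g)
    (TensorProduct.liftAddHom φ (by
      intro n l r
      simp only [AddMonoidHom.map_zsmul, AddMonoidHom.smul_apply]) ).toIntLinearMap
    (by
      rw [rel, Submodule.span_le]
      rintro x ⟨l, c, r, rfl⟩
      simp only [SetLike.mem_coe, LinearMap.mem_ker, AddMonoidHom.coe_toIntLinearMap,
        map_sub, TensorProduct.liftAddHom_tmul]
      rw [hbal, sub_self])).toAddMonoidHom

@[simp] lemma lift_tmul {P : Type*} [AddCommGroup P] (φ : L →+ R →+ P)
    (hbal : ∀ l c r, φ (l * f c) r = φ l (g c * r)) (l : L) (r : R) :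
    lift f g φ hbal (tmul f g l r) = φ l r := rfl

/-- The outer left action of `L` on `L ⊗_C R`. -/
def lact (l : L) : Tens f g →+ Tens f g :=
  lift f g (mkBilin (fun l' r => tmul f g (l * l') r)
      (fun a b r => by rw [mul_add, tmul_add_left])
      (fun a r s => by rw [tmul_add_right]))
    (fun l' c r => by simp only [mkBilin_apply]; rw [← mul_assoc, tmul_rel])

@[simp] lemma lact_tmul (l l' : L) (r : R) :
    lact f g l (tmul f g l' r) = tmul f g (l * l') r := rfl

/-- The outer right action of `R` on `L ⊗_C R`. -/
def ract (r : R) : Tens f g →+ Tens f g :=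
  lift f g (mkBilin (fun l' r' => tmul f g l' (r' * r))
      (fun a b r' => by rw [tmul_add_left])
      (fun a r' s => by rw [add_mul, tmul_add_right]))
    (fun l' c r' => by simp only [mkBilin_apply]; rw [tmul_rel, mul_assoc])

@[simp] lemma ract_tmul (r r' : R) (l : L) :
    ract f g r (tmul f g l r') = tmul f g l (r' * r) := rfl

/-- The map induced on relative tensor products by a ring map on the left factor. -/
def mapLeft {L' : Type*} [Ring L'] (h : L →+* L') :
    Tens f g →+ Tens (h.comp f) g :=
  lift f g (mkBilin (fun l r => tmul (h.comp f) g (h l) r)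
      (fun a b r => by rw [map_add, tmul_add_left])
      (fun a r s => by rw [tmul_add_right]))
    (fun l c r => by
      simp only [mkBilin_apply, map_mul]
      exact tmul_rel (h.comp f) g (h l) c r)

@[simp] lemma mapLeft_tmul {L' : Type*} [Ring L'] (h : L →+* L') (l : L) (r : R) :
    mapLeft f g h (tmul f g l r) = tmul (h.comp f) g (h l) r := rfl

/-- The multiplication map `L ⊗_C R → R`, `l ⊗ r ↦ jl l * r`, for a ring map
`jl : L → R` compatible with the two maps from `C`. -/
def mulMap (jl : L →+* R) (hcomp : ∀ c, jl (f c) = g c) : Tens f g →+ R :=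
  lift f g (mkBilin (fun l r => jl l * r)
      (fun a b r => by rw [map_add, add_mul])
      (fun a r s => by rw [mul_add]))
    (fun l c r => by simp only [mkBilin_apply]; rw [map_mul, hcomp, mul_assoc])

@[simp] lemma mulMap_tmul (jl : L →+* R) (hcomp : ∀ c, jl (f c) = g c) (l : L) (r : R) :
    mulMap f g jl hcomp (tmul f g l r) = jl l * r := rfl

/-- Induction principle: every element of `L ⊗_C R` is built from `tmul`s. -/
lemma tens_induction {p : Tens f g → Prop} (zero : p 0)
    (tm : ∀ l r, p (tmul f g l r)) (add : ∀ x y, p x → p y → p (x + y)) :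
    ∀ x, p x := by
  intro x
  obtain ⟨y, rfl⟩ := Submodule.Quotient.mk_surjective _ x
  induction y using TensorProduct.induction_on with
  | zero => exact zero
  | tmul l r => exact tm l r
  | add a b ha hb =>
      rw [Submodule.Quotient.mk_add]
      exact add _ _ ha hb

end NCT
end

noncomputable section
open NCT

/-- The tower `A ⊇ B ⊇ C` (given by injective ring maps `ι : C → B`, `j : B → A`) is
*left relative H-separable*: `B ⊗_C A ⊕ * ≅ A^n` as `B`-`A`-bimodules. -/
def LeftRelHSep {C B A : Type*} [Ring C] [Ring B] [Ring A]
    (ι : C →+* B) (j : B →+* A) (n : ℕ) : Prop :=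
  ∃ (i : Tens ι (j.comp ι) →+ (Fin n → A)) (p : (Fin n → A) →+ Tens ι (j.comp ι)),
    (∀ (b : B) x, i (lact ι (j.comp ι) b x) = fun k => j b * i x k) ∧
    (∀ (a : A) x, i (ract ι (j.comp ι) a x) = fun k => i x k * a) ∧
    (∀ (b : B) v, p (fun k => j b * v k) = lact ι (j.comp ι) b (p v)) ∧
    (∀ (a : A) v, p (fun k => v k * a) = ract ι (j.comp ι) a (p v)) ∧
    ∀ x, p (i x) = x

/-- `B` is a *left relative separable extension of `C` in `A`*: the multiplication map
`μ : B ⊗_C A → A` splits as a `B`-`A`-bimodule epimorphism. -/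
def LeftRelSep {C B A : Type*} [Ring C] [Ring B] [Ring A]
    (ι : C →+* B) (j : B →+* A) : Prop :=
  ∃ σ : A →+ Tens ι (j.comp ι),
    (∀ (b : B) (a : A), σ (j b * a) = lact ι (j.comp ι) b (σ a)) ∧
    (∀ (a a' : A), σ (a * a') = ract ι (j.comp ι) a' (σ a)) ∧
    ∀ a, mulMap ι (j.comp ι) j (fun _ => rfl) (σ a) = a

/-- `B ⊇ C` is a separable extension: there is a `B`-central element
`e ∈ B ⊗_C B` with `μ(e) = 1`. -/
def IsSepExt {C B : Type*} [Ring C] [Ring B] (ι : C →+* B) : Prop :=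
  ∃ e : Tens ι ι, (∀ b : B, lact ι ι b e = ract ι ι b e) ∧
    mulMap ι ι (RingHom.id B) (fun _ => rfl) e = 1

/-- The tower `A ⊇ B ⊇ C` is *right relative H-separable*:
`A ⊗_C B ⊕ * ≅ A^n` as `A`-`B`-bimodules. -/
def RightRelHSep {C B A : Type*} [Ring C] [Ring B] [Ring A]
    (ι : C →+* B) (j : B →+* A) (n : ℕ) : Prop :=
  ∃ (i : Tens (j.comp ι) ι →+ (Fin n → A)) (p : (Fin n → A) →+ Tens (j.comp ι) ι),
    (∀ (a : A) x, i (lact (j.comp ι) ι a x) = fun k => a * i x k) ∧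
    (∀ (b : B) x, i (ract (j.comp ι) ι b x) = fun k => i x k * j b) ∧
    (∀ (a : A) v, p (fun k => a * v k) = lact (j.comp ι) ι a (p v)) ∧
    (∀ (b : B) v, p (fun k => v k * j b) = ract (j.comp ι) ι b (p v)) ∧
    ∀ x, p (i x) = x

/-! The Frobenius form `F` gives the pairing `(a ⊗ b, b' ⊗ a') ↦ a F(b b') a'` between
`A ⊗_C B` and `B ⊗_C A`. The dual bases make it perfect on both sides, compatibly with the
`B`-actions: `A ⊗_C B` is the right `A`-dual `Hom(B ⊗_C A, A_A) ≅ Hom(B_C, A_C)` of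
`B ⊗_C A`, and `B ⊗_C A` is the left `A`-dual of `A ⊗_C B`. Since `Aⁿ` is self-dual,
dualizing over `A` carries a splitting `B ⊗_C A ⊕ * ≅ Aⁿ` to a splitting
`A ⊗_C B ⊕ * ≅ Aⁿ`; the converse is the same argument over the opposite rings. -/

theorem Pi.single_one_mul {ι A : Type*} [DecidableEq ι] [MulZeroOneClass A] (k : ι) (a : A) :
    (fun l => (Pi.single k 1 : ι → A) l * a) = Pi.single k a := by
  funext l; by_cases h : l = k <;> simp [h]

theorem Pi.mul_single_one {ι A : Type*} [DecidableEq ι] [MulZeroOneClass A] (k : ι) (a : A) :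
    (fun l => a * (Pi.single k 1 : ι → A) l) = Pi.single k a := by
  funext l; by_cases h : l = k <;> simp [h]

section

variable {S T A M : Type*} [Ring A] [AddCommGroup M]

/-- `M` is a direct summand of `Aⁿ` as a bimodule, `S` and `T` acting on `Aⁿ` by
multiplication through `jL` on the left and `jR` on the right. -/
structure PiRetract (jL : S → A) (jR : T → A) (lM : S → M →+ M) (rM : T → M →+ M) (n : ℕ) where
  i : M →+ (Fin n → A)
  p : (Fin n → A) →+ M
  i_lM (s : S) (z : M) : i (lM s z) = fun k => jL s * i z k
  i_rM (t : T) (z : M) : i (rM t z) = fun k => i z k * jR t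
  p_lM (s : S) (v : Fin n → A) : p (fun k => jL s * v k) = lM s (p v)
  p_rM (t : T) (v : Fin n → A) : p (fun k => v k * jR t) = rM t (p v)
  p_i (z : M) : p (i z) = z

namespace PiRetract

variable {jL : S → A} {jR : T → A} {lM : S → M →+ M} {rM : T → M →+ M} {n : ℕ}

theorem nonempty_iff : Nonempty (PiRetract jL jR lM rM n) ↔
    ∃ (i : M →+ (Fin n → A)) (p : (Fin n → A) →+ M),
      (∀ s z, i (lM s z) = fun k => jL s * i z k) ∧
      (∀ t z, i (rM t z) = fun k => i z k * jR t) ∧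
      (∀ s v, p (fun k => jL s * v k) = lM s (p v)) ∧
      (∀ t v, p (fun k => v k * jR t) = rM t (p v)) ∧
      ∀ z, p (i z) = z :=
  ⟨fun ⟨R⟩ => ⟨R.i, R.p, R.i_lM, R.i_rM, R.p_lM, R.p_rM, R.p_i⟩,
    fun ⟨i, p, h₁, h₂, h₃, h₄, h₅⟩ => ⟨⟨i, p, h₁, h₂, h₃, h₄, h₅⟩⟩⟩

def op (R : PiRetract jL jR lM rM n) :
    PiRetract (A := Aᵐᵒᵖ) (fun t : Tᵐᵒᵖ => MulOpposite.op (jR t.unop))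
      (fun s : Sᵐᵒᵖ => MulOpposite.op (jL s.unop)) (fun t : Tᵐᵒᵖ => rM t.unop)
      (fun s : Sᵐᵒᵖ => lM s.unop) n where
  i := AddMonoidHom.mk' (fun z k => .op (R.i z k)) fun _ _ => by funext; simp
  p := AddMonoidHom.mk' (fun v => R.p fun k => (v k).unop) fun _ _ => by rw [← map_add]; rfl
  i_lM t z := by funext k; simp [R.i_rM]
  i_rM s z := by funext k; simp [R.i_lM]
  p_lM t v := by simpa using R.p_rM t.unop (fun k => (v k).unop)
  p_rM s v := by simpa using R.p_lM s.unop (fun k => (v k).unop)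
  p_i z := by simp [R.p_i]

def unop (R : PiRetract (A := Aᵐᵒᵖ) (fun t : Tᵐᵒᵖ => MulOpposite.op (jR t.unop))
      (fun s : Sᵐᵒᵖ => MulOpposite.op (jL s.unop)) (fun t : Tᵐᵒᵖ => rM t.unop)
      (fun s : Sᵐᵒᵖ => lM s.unop) n) :
    PiRetract jL jR lM rM n where
  i := AddMonoidHom.mk' (fun z k => (R.i z k).unop) fun _ _ => by funext; simp
  p := AddMonoidHom.mk' (fun v => R.p fun k => .op (v k)) fun _ _ => by rw [← map_add]; rfl
  i_lM s z := by funext k; simpa using congrArg MulOpposite.unop (congrFun (R.i_rM (.op s) z) k)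
  i_rM t z := by funext k; simpa using congrArg MulOpposite.unop (congrFun (R.i_lM (.op t) z) k)
  p_lM s v := by simpa using R.p_rM (.op s) (fun k => .op (v k))
  p_rM t v := by simpa using R.p_lM (.op t) (fun k => .op (v k))
  p_i z := by simp [R.p_i]

variable {rA : A → M →+ M} (R : PiRetract jL id lM rA n)

theorem lM_p_single_eq (s : S) (k : Fin n) :
    lM s (R.p (Pi.single k 1)) = rA (jL s) (R.p (Pi.single k 1)) := by
  rw [← R.p_lM, ← R.p_rM, id, Pi.mul_single_one, Pi.single_one_mul]

theorem p_eq_sum (v : Fin n → A) : R.p v = ∑ k, rA (v k) (R.p (Pi.single k 1)) := by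
  simp_rw [← R.p_rM, id, Pi.single_one_mul, ← map_sum, Finset.univ_sum_single]

end PiRetract

end

section

variable {S A X Y : Type*} [Ring A] [AddCommGroup X] [AddCommGroup Y]

/-- A pairing exhibiting the `A`-`S`-bimodule `Y` as the right `A`-dual of the
`S`-`A`-bimodule `X`, and `X` as the left `A`-dual of `Y`, through the dual bases
`u`, `w`. -/
structure DualBasisPairing (lX : S → X →+ X) (rX : A → X →+ X) (lY : A → Y →+ Y)
    (rY : S → Y →+ Y) where
  pair : Y →+ X →+ A
  pair_lY (a : A) (t : Y) (z : X) : pair (lY a t) z = a * pair t z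
  pair_rY (s : S) (t : Y) (z : X) : pair (rY s t) z = pair t (lX s z)
  pair_rX (a : A) (t : Y) (z : X) : pair t (rX a z) = pair t z * a
  N : ℕ
  u : Fin N → X
  w : Fin N → Y
  sum_lY_pair (t : Y) : ∑ m, lY (pair t (u m)) (w m) = t
  sum_rX_pair (z : X) : ∑ m, rX (pair (w m) z) (u m) = z

namespace DualBasisPairing

variable {lX : S → X →+ X} {rX : A → X →+ X} {lY : A → Y →+ Y} {rY : S → Y →+ Y}
  (D : DualBasisPairing lX rX lY rY)

theorem ext_pair {t t' : Y} (h : ∀ z, D.pair t z = D.pair t' z) : t = t' := by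
  rw [← D.sum_lY_pair t, ← D.sum_lY_pair t']
  simp only [h]

def symm : DualBasisPairing (S := Sᵐᵒᵖ) (A := Aᵐᵒᵖ) (fun s => rY s.unop) (fun a => lY a.unop)
    (fun a => rX a.unop) (fun s => lX s.unop) where
  pair := D.pair.flip.compr₂ (MulOpposite.opAddEquiv : A ≃+ Aᵐᵒᵖ).toAddMonoidHom
  pair_lY a z t := by simp [D.pair_rX]
  pair_rY s z t := by simp [D.pair_rY]
  pair_rX a z t := by simp [D.pair_lY]
  N := D.N
  u := D.w
  w := D.u
  sum_lY_pair := D.sum_rX_pair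
  sum_rX_pair := D.sum_lY_pair

def dual (f : X →+ A) : Y := ∑ m, lY (f (D.u m)) (D.w m)

theorem pair_dual {f : X →+ A} (hf : ∀ a z, f (rX a z) = f z * a) (z : X) :
    D.pair (D.dual f) z = f z := calc
  D.pair (D.dual f) z = ∑ m, f (D.u m) * D.pair (D.w m) z := by
    simp [dual, D.pair_lY]
  _ = f (∑ m, rX (D.pair (D.w m) z) (D.u m)) := by simp [hf]
  _ = f z := by rw [D.sum_rX_pair]

section DualRetract

variable {j : S → A} {n : ℕ} (R : PiRetract j id lX rX n)

def dualRetractP (v : Fin n → A) : Y :=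
  ∑ k, lY (v k) (D.dual ((Pi.evalAddMonoidHom (fun _ => A) k).comp R.i))

theorem pair_dualRetractP (v : Fin n → A) (z : X) :
    D.pair (D.dualRetractP R v) z = ∑ k, v k * R.i z k := by
  simp only [dualRetractP, map_sum, AddMonoidHom.finsetSum_apply, D.pair_lY]
  congr! 2 with k
  exact D.pair_dual (fun a z => by simp [R.i_rM]) z

def dualRetract : PiRetract id j lY rY n where
  i := AddMonoidHom.pi fun k => D.pair.flip (R.p (Pi.single k 1))
  p := AddMonoidHom.mk' (D.dualRetractP R) fun v v' => D.ext_pair fun z => by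
    simp [pair_dualRetractP, add_mul, Finset.sum_add_distrib]
  i_lM a t := by funext k; simp [D.pair_lY]
  i_rM s t := by funext k; simp [D.pair_rY, R.lM_p_single_eq, D.pair_rX]
  p_lM a v := D.ext_pair fun z => by simp [pair_dualRetractP, D.pair_lY, Finset.mul_sum, mul_assoc]
  p_rM s v := D.ext_pair fun z => by simp [pair_dualRetractP, D.pair_rY, R.i_lM, mul_assoc]
  p_i t := D.ext_pair fun z => by
    conv_rhs => rw [← R.p_i z, R.p_eq_sum]
    simp [pair_dualRetractP, D.pair_rX]

end DualRetract

theorem nonempty_piRetract_iff (D : DualBasisPairing lX rX lY rY) (j : S → A) (n : ℕ) :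
    Nonempty (PiRetract j id lX rX n) ↔ Nonempty (PiRetract id j lY rY n) :=
  ⟨fun ⟨R⟩ => ⟨D.dualRetract R⟩,
    fun ⟨R⟩ => ⟨(D.symm.dualRetract (j := fun s => .op (j s.unop)) R.op).unop⟩⟩

end DualBasisPairing

end

namespace NCT

section

variable {C L R : Type*} [Ring C] [Ring L] [Ring R] (f : C →+* L) (g : C →+* R)

theorem hom_ext {P : Type*} [AddCommGroup P] {φ ψ : Tens f g →+ P}
    (h : ∀ l r, φ (tmul f g l r) = ψ (tmul f g l r)) : φ = ψ := by
  ext t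
  induction t using tens_induction f g with
  | zero => simp
  | tm l r => exact h l r
  | add u v hu hv => simp [hu, hv]

theorem hom_ext₂ {C' L' R' P : Type*} [Ring C'] [Ring L'] [Ring R'] [AddCommGroup P]
    (f' : C' →+* L') (g' : C' →+* R') {φ ψ : Tens f g →+ Tens f' g' →+ P}
    (h : ∀ l r l' r', φ (tmul f g l r) (tmul f' g' l' r') = ψ (tmul f g l r) (tmul f' g' l' r')) :
    φ = ψ :=
  hom_ext f g fun l r => hom_ext f' g' (h l r)

theorem tmul_sum {κ : Type*} (s : Finset κ) (l : L) (r : κ → R) :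
    tmul f g l (∑ k ∈ s, r k) = ∑ k ∈ s, tmul f g l (r k) :=
  map_sum (AddMonoidHom.mk' (tmul f g l) (tmul_add_right f g l)) r s

theorem sum_tmul {κ : Type*} (s : Finset κ) (l : κ → L) (r : R) :
    tmul f g (∑ k ∈ s, l k) r = ∑ k ∈ s, tmul f g (l k) r :=
  map_sum (AddMonoidHom.mk' (tmul f g · r) (tmul_add_left f g · · r)) l s

@[simp] theorem zero_tmul (r : R) : tmul f g 0 r = 0 := by
  simpa using sum_tmul f g ∅ (fun _ : Unit => 0) r

@[simp] theorem tmul_zero (l : L) : tmul f g l 0 = 0 := by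
  simpa using tmul_sum f g ∅ l (fun _ : Unit => 0)

end

section FrobeniusPairing

variable {C B A : Type*} [Ring C] [Ring B] [Ring A] (ι : C →+* B) (g : C →+* A) (F : B →+ C)
  (hF : ∀ (c : C) (b : B) (c' : C), F (ι c * b * ι c') = c * F b * c')

def frobPairing : Tens g ι →+ Tens ι g →+ A :=
  lift g ι
    (mkBilin
      (fun a b => lift ι g
        (mkBilin (fun b' a' => a * g (F (b * b')) * a')
          (fun _ _ _ => by simp only [mul_add, map_add, add_mul])
          (fun _ _ _ => by rw [mul_add]))
        (fun b' c a' => by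
          simpa [mul_assoc] using congrArg (a * g · * a') (hF 1 (b * b') c)))
      (fun _ _ _ => hom_ext ι g fun _ _ => by simp [add_mul])
      (fun _ _ _ => hom_ext ι g fun _ _ => by simp [mul_add, add_mul]))
    (fun a c b => hom_ext ι g fun b' a' => by
      simpa [mul_assoc] using (congrArg (a * g · * a') (hF c (b * b') 1)).symm)

@[simp] theorem frobPairing_tmul (a : A) (b b' : B) (a' : A) :
    frobPairing ι g F hF (tmul g ι a b) (tmul ι g b' a') = a * g (F (b * b')) * a' := rfl

theorem frobPairing_lact (a : A) (t : Tens g ι) (z : Tens ι g) :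
    frobPairing ι g F hF (lact g ι a t) z = a * frobPairing ι g F hF t z := by
  refine congr($(hom_ext₂ g ι ι g (φ := (frobPairing ι g F hF).comp (lact g ι a))
    (ψ := (frobPairing ι g F hF).compr₂ (AddMonoidHom.mulLeft a)) ?_) t z)
  intros; simp [mul_assoc]

theorem frobPairing_ract_left (b : B) (t : Tens g ι) (z : Tens ι g) :
    frobPairing ι g F hF (ract g ι b t) z = frobPairing ι g F hF t (lact ι g b z) := by
  refine congr($(hom_ext₂ g ι ι g (φ := (frobPairing ι g F hF).comp (ract g ι b))
    (ψ := (frobPairing ι g F hF).compl₂ (lact ι g b)) ?_) t z)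
  intros; simp [mul_assoc]

theorem frobPairing_ract_right (a : A) (t : Tens g ι) (z : Tens ι g) :
    frobPairing ι g F hF t (ract ι g a z) = frobPairing ι g F hF t z * a := by
  refine congr($(hom_ext₂ g ι ι g (φ := (frobPairing ι g F hF).compl₂ (ract ι g a))
    (ψ := (frobPairing ι g F hF).compr₂ (AddMonoidHom.mulRight a)) ?_) t z)
  intros; simp [mul_assoc]

variable {N : ℕ} (x y : Fin N → B)

theorem sum_lact_frobPairing (hdb2 : ∀ b : B, ∑ k, ι (F (b * x k)) * y k = b) (t : Tens g ι) :
    ∑ m, lact g ι (frobPairing ι g F hF t (tmul ι g (x m) 1)) (tmul g ι 1 (y m)) = t := by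
  induction t using tens_induction g ι with
  | zero => simp
  | tm a b =>
    simp only [frobPairing_tmul, lact_tmul, mul_one, tmul_rel, ← tmul_sum, hdb2]
  | add u v hu hv =>
    simp only [map_add, AddMonoidHom.add_apply, lact_tmul, add_mul, tmul_add_left,
      Finset.sum_add_distrib] at hu hv ⊢
    rw [hu, hv]

theorem sum_ract_frobPairing (hdb1 : ∀ b : B, ∑ k, x k * ι (F (y k * b)) = b) (z : Tens ι g) :
    ∑ m, ract ι g (frobPairing ι g F hF (tmul g ι 1 (y m)) z) (tmul ι g (x m) 1) = z := by
  induction z using tens_induction ι g with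
  | zero => simp
  | tm b a =>
    simp only [frobPairing_tmul, ract_tmul, one_mul, ← tmul_rel, ← sum_tmul, hdb1]
  | add u v hu hv =>
    simp only [map_add, ract_tmul, one_mul, tmul_add_right, Finset.sum_add_distrib] at hu hv ⊢
    rw [hu, hv]

def frobDualBasisPairing (hdb1 : ∀ b : B, ∑ k, x k * ι (F (y k * b)) = b)
    (hdb2 : ∀ b : B, ∑ k, ι (F (b * x k)) * y k = b) :
    DualBasisPairing (lact ι g) (ract ι g) (lact g ι) (ract g ι) where
  pair := frobPairing ι g F hF
  pair_lY := frobPairing_lact ι g F hF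
  pair_rY := frobPairing_ract_left ι g F hF
  pair_rX := frobPairing_ract_right ι g F hF
  N := N
  u m := tmul ι g (x m) 1
  w m := tmul g ι 1 (y m)
  sum_lY_pair := sum_lact_frobPairing ι g F hF x y hdb2
  sum_rX_pair := sum_ract_frobPairing ι g F hF x y hdb1

end FrobeniusPairing

end NCT

theorem frobenius_leftRelHSep_iff_rightRelHSep_general
    {C B A : Type*} [Ring C] [Ring B] [Ring A]
    (ι : C →+* B) (j : B →+* A)
    (F : B →+ C)
    (hFbil : ∀ (c : C) (b : B) (c' : C), F (ι c * b * ι c') = c * F b * c')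
    (N : ℕ) (x y : Fin N → B)
    (hdb1 : ∀ b : B, ∑ k, x k * ι (F (y k * b)) = b)
    (hdb2 : ∀ b : B, ∑ k, ι (F (b * x k)) * y k = b) :
    (∃ n, LeftRelHSep ι j n) ↔ (∃ n, RightRelHSep ι j n) :=
  exists_congr fun n => PiRetract.nonempty_iff.symm.trans <|
    ((frobDualBasisPairing ι (j.comp ι) F hFbil x y hdb1 hdb2).nonempty_piRetract_iff j n).trans
      PiRetract.nonempty_iff

/-- if `B ⊇ C` is a Frobenius extension (with Frobenius homomorphism
`F : B → C` and dual bases `x_i`, `y_i`), then a tower `A ⊇ B ⊇ C` is left relative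
H-separable iff it is right relative H-separable. -/
theorem frobenius_leftRelHSep_iff_rightRelHSep
    {C B A : Type*} [Ring C] [Ring B] [Ring A]
    (ι : C →+* B) (j : B →+* A)
    (hι : Function.Injective ι) (hj : Function.Injective j)
    (F : B →+ C)
    (hFbil : ∀ (c : C) (b : B) (c' : C), F (ι c * b * ι c') = c * F b * c')
    (N : ℕ) (x y : Fin N → B)
    (hdb1 : ∀ b : B, ∑ k, x k * ι (F (y k * b)) = b)
    (hdb2 : ∀ b : B, ∑ k, ι (F (b * x k)) * y k = b) :
    (∃ n, LeftRelHSep ι j n) ↔ (∃ n, RightRelHSep ι j n) :=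
  frobenius_leftRelHSep_iff_rightRelHSep_general ι j F hFbil N x y hdb1 hdb2

end
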